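/- For m ≡ 2 (mod 4) and n ≡ 2 (mod 4) with n, m ≥ 6, the paired domination number of C_n × C_m is at most (n+2)(m+2)/4 − 6. -/

import Mathlib

open SimpleGraph

/-- The toroidal mesh `C_n × C_m`: Cartesian product of two cycles, with
vertex set `ZMod n × ZMod m`. -/
def torusGraph (n m : ℕ) : SimpleGraph (ZMod n × ZMod m) where
  Adj a b := a ≠ b ∧ ((a.1 = b.1 ∧ (a.2 = b.2 + 1 ∨ b.2 = a.2 + 1)) ∨
    (a.2 = b.2 ∧ (a.1 = b.1 + 1 ∨ b.1 = a.1 + 1)))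
  symm := by
    constructor
    intro a b h
    obtain ⟨hne, h⟩ := h
    refine ⟨hne.symm, ?_⟩
    rcases h with ⟨h1, h2⟩ | ⟨h1, h2⟩
    · exact Or.inl ⟨h1.symm, h2.symm⟩
    · exact Or.inr ⟨h1.symm, h2.symm⟩
  loopless := by constructor; intro a h; exact h.1 rfl

/-- `D` is a total dominating set of `G`: every vertex has a neighbor in `D`. -/
def IsTotalDomSet {V : Type*} (G : SimpleGraph V) (D : Set V) : Prop :=
  ∀ v : V, ∃ u ∈ D, G.Adj v u

/-- `D` is a dominating set of `G`: every vertex outside `D` has a neighbor in `D`. -/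
def IsDomSet {V : Type*} (G : SimpleGraph V) (D : Set V) : Prop :=
  ∀ v : V, v ∉ D → ∃ u ∈ D, G.Adj v u

/-- `D` is a paired dominating set: a dominating set whose induced subgraph
has a perfect matching. -/
def IsPairedDomSet {V : Type*} (G : SimpleGraph V) (D : Set V) : Prop :=
  IsDomSet G D ∧ ∃ M : (G.induce D).Subgraph, M.IsPerfectMatching

/-- The total domination number. -/
noncomputable def totalDomNum {V : Type*} (G : SimpleGraph V) : ℕ :=
  sInf {k | ∃ D : Set V, IsTotalDomSet G D ∧ D.ncard = k}

/-- The paired domination number. -/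
noncomputable def pairedDomNum {V : Type*} (G : SimpleGraph V) : ℕ :=
  sInf {k | ∃ D : Set V, IsPairedDomSet G D ∧ D.ncard = k}

/-- The domination number. -/
noncomputable def domNum {V : Type*} (G : SimpleGraph V) : ℕ :=
  sInf {k | ∃ D : Set V, IsDomSet G D ∧ D.ncard = k}

/-!
Write `n = 4a + 2`, `m = 4b + 2` and view the vertices as cells `(i, j)` with `i < n`, `j < m`.
Rows `i ≡ 2 (mod 4)` take the columns `j ≡ 2, 3 (mod 4)` and the rows `i ≡ 0 (mod 4)` the
columns `j ≡ 0, 1 (mod 4)`: each such row dominates itself, and every odd row lies between one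
row of each kind. Since `n, m ≡ 2 (mod 4)` this periodic pattern does not close up around the
torus; it is repaired in the last two columns and in the rows `0`, `4a` and `4a + 1`. The chosen
cells come in vertically adjacent pairs, which form the perfect matching, and there are
`4ab + 4a + 4b - 2 = (n + 2)(m + 2)/4 - 6` of them.
-/

theorem isPairedDomSet_of_involution {V : Type*} {G : SimpleGraph V} {D : Set V}
    (hD : IsDomSet G D) (f : V → V) (hfD : ∀ v ∈ D, f v ∈ D) (hff : ∀ v ∈ D, f (f v) = v)
    (hadj : ∀ v ∈ D, G.Adj v (f v)) : IsPairedDomSet G D := by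
  refine ⟨hD, ⟨Set.univ, fun u w => (w : V) = f u, ?_, fun _ => Set.mem_univ _, ?_⟩, ?_⟩
  · intro u w (h : (w : V) = f u)
    change G.Adj u w
    rw [h]
    exact hadj u u.2
  · constructor
    rintro u w (h : (w : V) = f u)
    rw [h, hff u u.2]
  · refine Subgraph.isPerfectMatching_iff.mpr fun v => ⟨⟨f v, hfD v v.2⟩, rfl, ?_⟩
    rintro w (h : (w : V) = f v)
    exact Subtype.ext h

theorem pairedDomNum_le_ncard {V : Type*} {G : SimpleGraph V} {D : Set V}
    (h : IsPairedDomSet G D) : pairedDomNum G ≤ D.ncard :=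
  Nat.sInf_le ⟨D, h, rfl⟩

/-- Adjacency in `C_m` on the representatives `0, …, m - 1`; reducible so that `omega` sees
through it. -/
abbrev CycleAdj (m j j' : ℕ) : Prop :=
  j' = j + 1 ∨ j = j' + 1 ∨ (j = 0 ∧ j' + 1 = m) ∨ (j' = 0 ∧ j + 1 = m)

def TorusAdj (n m : ℕ) (p q : ℕ × ℕ) : Prop :=
  (p.1 = q.1 ∧ CycleAdj m p.2 q.2) ∨ (p.2 = q.2 ∧ CycleAdj n p.1 q.1)

section TorusCoordinates

variable {n m : ℕ}

def torusCell (n m : ℕ) (p : ℕ × ℕ) : ZMod n × ZMod m := (p.1, p.2)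

def torusCoords (v : ZMod n × ZMod m) : ℕ × ℕ := (v.1.val, v.2.val)

theorem torusCell_torusCoords [NeZero n] [NeZero m] (v : ZMod n × ZMod m) :
    torusCell n m (torusCoords v) = v := by
  simp [torusCell, torusCoords]

theorem torusCoords_torusCell {p : ℕ × ℕ} (h : p.1 < n ∧ p.2 < m) :
    torusCoords (torusCell n m p) = p := by
  simp [torusCell, torusCoords, ZMod.val_cast_of_lt h.1, ZMod.val_cast_of_lt h.2]

theorem natCast_eq_add_one_of_cycleAdj {j j' : ℕ} (h : CycleAdj m j j') :
    (j' : ZMod m) = j + 1 ∨ (j : ZMod m) = j' + 1 := by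
  rcases h with rfl | rfl | ⟨rfl, h⟩ | ⟨rfl, h⟩
  · exact .inl (Nat.cast_succ j)
  · exact .inr (Nat.cast_succ j')
  · refine .inr ?_
    rw [← Nat.cast_add_one, h, ZMod.natCast_self, Nat.cast_zero]
  · refine .inl ?_
    rw [← Nat.cast_add_one, h, ZMod.natCast_self, Nat.cast_zero]

theorem torusGraph_adj_torusCell [Fact (1 < n)] [Fact (1 < m)] {p q : ℕ × ℕ}
    (h : TorusAdj n m p q) : (torusGraph n m).Adj (torusCell n m p) (torusCell n m q) := by
  have ne_of_add_one {k : ℕ} [Fact (1 < k)] {x y : ZMod k} (h : y = x + 1 ∨ x = y + 1) :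
      x ≠ y := by
    rintro rfl
    rcases h with h | h <;> exact one_ne_zero (left_eq_add.mp h)
  rcases h with ⟨h1, h2⟩ | ⟨h1, h2⟩
  · have h := natCast_eq_add_one_of_cycleAdj h2
    exact ⟨fun he => ne_of_add_one h (congrArg Prod.snd he), .inl ⟨congrArg Nat.cast h1, h.symm⟩⟩
  · have h := natCast_eq_add_one_of_cycleAdj h2
    exact ⟨fun he => ne_of_add_one h (congrArg Prod.fst he), .inr ⟨congrArg Nat.cast h1, h.symm⟩⟩

theorem pairedDomNum_torusGraph_le [Fact (1 < n)] [Fact (1 < m)] {P : ℕ × ℕ → Prop}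
    (S : Finset (ℕ × ℕ)) (σ : ℕ × ℕ → ℕ × ℕ)
    (hP : ∀ p, P p → p.1 < n ∧ p.2 < m) (hS : ∀ p, P p → p ∈ S)
    (hdom : ∀ p, p.1 < n → p.2 < m → ¬ P p → ∃ q, P q ∧ TorusAdj n m p q)
    (hσ : ∀ p, P p → P (σ p) ∧ σ (σ p) = p ∧ TorusAdj n m p (σ p)) :
    pairedDomNum (torusGraph n m) ≤ S.card := by
  set D : Set (ZMod n × ZMod m) := {v | P (torusCoords v)}
  have hcoords {p : ℕ × ℕ} (hp : P p) : torusCoords (torusCell n m p) = p :=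
    torusCoords_torusCell (hP p hp)
  have hD : IsDomSet (torusGraph n m) D := by
    intro v hv
    obtain ⟨q, hq, hadj⟩ := hdom (torusCoords v) (ZMod.val_lt _) (ZMod.val_lt _) hv
    refine ⟨torusCell n m q, show P _ by rwa [hcoords hq], ?_⟩
    simpa only [torusCell_torusCoords] using torusGraph_adj_torusCell hadj
  have hpaired : IsPairedDomSet (torusGraph n m) D := by
    refine isPairedDomSet_of_involution hD (fun v => torusCell n m (σ (torusCoords v)))
      (fun v hv => ?_) (fun v hv => ?_) (fun v hv => ?_)
    · show P _
      rw [hcoords (hσ _ hv).1]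
      exact (hσ _ hv).1
    · rw [hcoords (hσ _ hv).1, (hσ _ hv).2.1, torusCell_torusCoords]
    · simpa only [torusCell_torusCoords] using torusGraph_adj_torusCell (hσ _ hv).2.2
  calc pairedDomNum (torusGraph n m) ≤ D.ncard := pairedDomNum_le_ncard hpaired
    _ ≤ (S.image (torusCell n m) : Set (ZMod n × ZMod m)).ncard := by
      refine Set.ncard_le_ncard (fun v hv => ?_) (Finset.finite_toSet _)
      exact Finset.mem_coe.mpr (Finset.mem_image.mpr ⟨_, hS _ hv, torusCell_torusCoords v⟩)
    _ ≤ S.card := by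
      rw [Set.ncard_coe_finset]
      exact Finset.card_image_le

end TorusCoordinates

inductive InTorusPattern (a b : ℕ) : ℕ × ℕ → Prop
  | rowZero {j : ℕ} : j + 3 ≤ 4 * b → InTorusPattern a b (0, j)
  | rowTwoModFour {i j : ℕ} : i % 4 = 2 → i < 4 * a → 2 ≤ j % 4 ∨ 4 * b ≤ j → j < 4 * b + 2 →
      InTorusPattern a b (i, j)
  | rowZeroModFour {i j : ℕ} : i % 4 = 0 → 0 < i → i < 4 * a → j % 4 < 2 → j < 4 * b + 2 →
      InTorusPattern a b (i, j)
  | rowPenultimate {j : ℕ} : j % 4 < 2 → j < 4 * b → InTorusPattern a b (4 * a, j)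
  | rowLast {j : ℕ} : 4 * b ≤ j + 1 → j ≤ 4 * b → InTorusPattern a b (4 * a + 1, j)

/-- Vertical dominoes start at odd columns in row `4a + 1` and at even columns elsewhere. -/
def torusPatternPartner (a : ℕ) : ℕ × ℕ → ℕ × ℕ
  | (i, j) => if i = 4 * a + 1 ↔ j % 2 = 1 then (i, j + 1) else (i, j - 1)

theorem torusPatternPartner_eq_or (a i j : ℕ) :
    (torusPatternPartner a (i, j) = (i, j + 1) ∧ (i = 4 * a + 1 ↔ j % 2 = 1)) ∨
      (torusPatternPartner a (i, j) = (i, j - 1) ∧ ¬(i = 4 * a + 1 ↔ j % 2 = 1)) := by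
  by_cases h : i = 4 * a + 1 ↔ j % 2 = 1
  · exact .inl ⟨if_pos h, h⟩
  · exact .inr ⟨if_neg h, h⟩

theorem torusPatternPartner_involutive (a : ℕ) : Function.Involutive (torusPatternPartner a) := by
  rintro ⟨i, j⟩
  rcases torusPatternPartner_eq_or a i j with ⟨he, hj⟩ | ⟨he, hj⟩ <;> rw [he]
  · rcases torusPatternPartner_eq_or a i (j + 1) with ⟨-, hj'⟩ | ⟨he', -⟩
    · omega
    · rw [he', Nat.add_sub_cancel]
  · rcases torusPatternPartner_eq_or a i (j - 1) with ⟨he', hj'⟩ | ⟨he', hj'⟩ <;> rw [he'] <;>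
      exact Prod.ext rfl (by omega)

namespace InTorusPattern

variable {a b : ℕ} {p : ℕ × ℕ}

theorem lt (h : InTorusPattern a b p) : p.1 < 4 * a + 2 ∧ p.2 < 4 * b + 2 := by
  cases h <;> omega

theorem partner (h : InTorusPattern a b p) : InTorusPattern a b (torusPatternPartner a p) := by
  obtain ⟨i, j⟩ := p
  rcases torusPatternPartner_eq_or a i j with ⟨he, hj⟩ | ⟨he, hj⟩ <;> rw [he] <;> cases h <;>
  first
  | exact .rowZero (by omega)
  | exact .rowTwoModFour (by omega) (by omega) (by omega) (by omega)
  | exact .rowZeroModFour (by omega) (by omega) (by omega) (by omega) (by omega)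
  | exact .rowPenultimate (by omega) (by omega)
  | exact .rowLast (by omega) (by omega)

theorem torusAdj_partner (hb : 1 ≤ b) (h : InTorusPattern a b p) :
    TorusAdj (4 * a + 2) (4 * b + 2) p (torusPatternPartner a p) := by
  obtain ⟨i, j⟩ := p
  rcases torusPatternPartner_eq_or a i j with ⟨he, hj⟩ | ⟨he, hj⟩ <;> rw [he] <;>
    refine .inl ⟨rfl, ?_⟩ <;> cases h <;> omega

end InTorusPattern

theorem TorusAdj.of_snd {n m i j j' : ℕ} (h : CycleAdj m j j') : TorusAdj n m (i, j) (i, j') :=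
  .inl ⟨rfl, h⟩

theorem TorusAdj.of_fst {n m i i' j : ℕ} (h : CycleAdj n i i') : TorusAdj n m (i, j) (i', j) :=
  .inr ⟨rfl, h⟩

section Domination

variable {a b i j : ℕ}

theorem exists_inTorusPattern_torusAdj_of_odd (hi : i % 2 = 1) (hia : i < 4 * a)
    (hj : j < 4 * b + 2) :
    ∃ q, InTorusPattern a b q ∧ TorusAdj (4 * a + 2) (4 * b + 2) (i, j) q := by
  obtain h | h | h | h | h | h :
      (i = 1 ∧ j + 3 ≤ 4 * b) ∨ (i % 4 = 1 ∧ 1 < i ∧ j % 4 < 2) ∨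
      (i % 4 = 3 ∧ i + 1 < 4 * a ∧ j % 4 < 2) ∨ (i + 1 = 4 * a ∧ j % 4 < 2 ∧ j < 4 * b) ∨
      (i % 4 = 1 ∧ (2 ≤ j % 4 ∨ 4 * b ≤ j)) ∨ (i % 4 = 3 ∧ (2 ≤ j % 4 ∨ 4 * b ≤ j)) := by
    omega
  · exact ⟨(0, j), .rowZero (by omega), .of_fst (by omega)⟩
  · exact ⟨(i - 1, j), .rowZeroModFour (by omega) (by omega) (by omega) (by omega) (by omega),
      .of_fst (by omega)⟩
  · exact ⟨(i + 1, j), .rowZeroModFour (by omega) (by omega) (by omega) (by omega) (by omega),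
      .of_fst (by omega)⟩
  · exact ⟨(4 * a, j), .rowPenultimate (by omega) (by omega), .of_fst (by omega)⟩
  · exact ⟨(i + 1, j), .rowTwoModFour (by omega) (by omega) (by omega) (by omega),
      .of_fst (by omega)⟩
  · exact ⟨(i - 1, j), .rowTwoModFour (by omega) (by omega) (by omega) (by omega),
      .of_fst (by omega)⟩

theorem exists_inTorusPattern_torusAdj_of_even (hi : i % 2 = 0) (hi0 : 0 < i) (hia : i < 4 * a)
    (hj : j < 4 * b + 2) :
    ∃ q, InTorusPattern a b q ∧ TorusAdj (4 * a + 2) (4 * b + 2) (i, j) q := by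
  obtain h | h | h | h | h | h :
      (i % 4 = 0 ∧ (j % 4 = 0 ∨ j % 4 = 3)) ∨ (i % 4 = 0 ∧ (j % 4 = 1 ∨ j % 4 = 2)) ∨
      (i % 4 = 2 ∧ j = 0) ∨ (i % 4 = 2 ∧ j = 4 * b + 1) ∨
      (i % 4 = 2 ∧ 0 < j ∧ (j % 4 = 0 ∨ j % 4 = 3)) ∨
      (i % 4 = 2 ∧ j < 4 * b + 1 ∧ (j % 4 = 1 ∨ j % 4 = 2)) := by
    omega
  · exact ⟨(i, j + 1), .rowZeroModFour (by omega) (by omega) (by omega) (by omega) (by omega),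
      .of_snd (by omega)⟩
  · exact ⟨(i, j - 1), .rowZeroModFour (by omega) (by omega) (by omega) (by omega) (by omega),
      .of_snd (by omega)⟩
  · exact ⟨(i, 4 * b + 1), .rowTwoModFour (by omega) (by omega) (by omega) (by omega),
      .of_snd (by omega)⟩
  · exact ⟨(i, 4 * b), .rowTwoModFour (by omega) (by omega) (by omega) (by omega),
      .of_snd (by omega)⟩
  · exact ⟨(i, j - 1), .rowTwoModFour (by omega) (by omega) (by omega) (by omega),
      .of_snd (by omega)⟩
  · exact ⟨(i, j + 1), .rowTwoModFour (by omega) (by omega) (by omega) (by omega),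
      .of_snd (by omega)⟩

theorem exists_inTorusPattern_torusAdj (hb : 1 ≤ b) (hi : i < 4 * a + 2) (hj : j < 4 * b + 2) :
    ∃ q, InTorusPattern a b q ∧ TorusAdj (4 * a + 2) (4 * b + 2) (i, j) q := by
  obtain rfl | rfl | rfl | ⟨hi2, hia⟩ | ⟨hi2, hi0, hia⟩ :
      i = 0 ∨ i = 4 * a + 1 ∨ i = 4 * a ∨ (i % 2 = 1 ∧ i < 4 * a) ∨
        (i % 2 = 0 ∧ 0 < i ∧ i < 4 * a) := by
    omega
  · obtain h | h | h | h :
        j = 0 ∨ (0 < j ∧ j + 2 ≤ 4 * b) ∨ (4 * b ≤ j + 1 ∧ j ≤ 4 * b) ∨ j = 4 * b + 1 := by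
      omega
    · exact ⟨(0, 1), .rowZero (by omega), .of_snd (by omega)⟩
    · exact ⟨(0, j - 1), .rowZero (by omega), .of_snd (by omega)⟩
    · exact ⟨(4 * a + 1, j), .rowLast (by omega) (by omega), .of_fst (by omega)⟩
    · exact ⟨(0, 0), .rowZero (by omega), .of_snd (by omega)⟩
  · obtain h | h | h : j + 3 ≤ 4 * b ∨ (4 * b ≤ j + 2 ∧ j < 4 * b) ∨ 4 * b ≤ j := by omega
    · exact ⟨(0, j), .rowZero (by omega), .of_fst (by omega)⟩
    · exact ⟨(4 * a + 1, j + 1), .rowLast (by omega) (by omega), .of_snd (by omega)⟩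
    · exact ⟨(4 * a + 1, j - 1), .rowLast (by omega) (by omega), .of_snd (by omega)⟩
  · obtain h | h | h | h :
        j = 4 * b + 1 ∨ (4 * b ≤ j + 1 ∧ j ≤ 4 * b) ∨
          ((j % 4 = 1 ∨ j % 4 = 2) ∧ j + 1 < 4 * b) ∨
          ((j % 4 = 0 ∨ j % 4 = 3) ∧ j + 1 < 4 * b) := by
      omega
    · exact ⟨(4 * a, 0), .rowPenultimate (by omega) (by omega), .of_snd (by omega)⟩
    · exact ⟨(4 * a + 1, j), .rowLast (by omega) (by omega), .of_fst (by omega)⟩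
    · exact ⟨(4 * a, j - 1), .rowPenultimate (by omega) (by omega), .of_snd (by omega)⟩
    · exact ⟨(4 * a, j + 1), .rowPenultimate (by omega) (by omega), .of_snd (by omega)⟩
  · exact exists_inTorusPattern_torusAdj_of_odd hi2 hia hj
  · exact exists_inTorusPattern_torusAdj_of_even hi2 hi0 hia hj

end Domination

section Counting

open Finset

def pairCols (k r : ℕ) : Finset ℕ :=
  (range k ×ˢ range 2).image fun x => 4 * x.1 + r + x.2

theorem mem_pairCols {k r j : ℕ} (hr : r ≤ j % 4) (hr' : j % 4 ≤ r + 1) (hj : j < 4 * k) :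
    j ∈ pairCols k r :=
  mem_image.mpr ⟨(j / 4, j % 4 - r), by simp only [mem_product, mem_range]; omega, by omega⟩

theorem card_pairCols_le (k r : ℕ) : #(pairCols k r) ≤ 2 * k :=
  card_image_le.trans (by simp [mul_comm])

def torusPatternCells (a b : ℕ) : Finset (ℕ × ℕ) :=
  (range (a - 1)).image (fun x => 4 * x + 4) ×ˢ pairCols (b + 1) 0 ∪
    (range a).image (fun x => 4 * x + 2) ×ˢ (pairCols b 2 ∪ {4 * b, 4 * b + 1}) ∪
    {4 * a} ×ˢ pairCols b 0 ∪ {0} ×ˢ range (4 * b - 2) ∪ {4 * a + 1} ×ˢ {4 * b - 1, 4 * b}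

theorem InTorusPattern.mem_cells {a b : ℕ} {p : ℕ × ℕ} (h : InTorusPattern a b p) :
    p ∈ torusPatternCells a b := by
  simp only [torusPatternCells, mem_union, mem_product, mem_image, mem_range, mem_singleton,
    mem_insert]
  cases h with
  | rowZero hj => exact .inl (.inr ⟨rfl, by omega⟩)
  | @rowTwoModFour i j hi hia hj hjb =>
    refine .inl (.inl (.inl (.inr ⟨⟨i / 4, by omega, by omega⟩, ?_⟩)))
    rcases hj with hj | hj
    · exact .inl (mem_pairCols (by omega) (by omega) (by omega))
    · exact .inr (by omega)
  | @rowZeroModFour i j hi hi0 hia hj hjb =>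
    exact .inl (.inl (.inl (.inl ⟨⟨i / 4 - 1, by omega, by omega⟩,
      mem_pairCols (by omega) (by omega) (by omega)⟩)))
  | rowPenultimate hj hjb =>
    exact .inl (.inl (.inr ⟨rfl, mem_pairCols (by omega) (by omega) hjb⟩))
  | rowLast hj hjb => exact .inr ⟨rfl, by omega⟩

theorem card_torusPatternCells_le {a b : ℕ} (ha : 1 ≤ a) (hb : 1 ≤ b) :
    #(torusPatternCells a b) ≤ 4 * (a + 1) * (b + 1) - 6 := by
  have hrows (k c : ℕ) : #((range k).image fun x => 4 * x + c) ≤ k :=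
    card_image_le.trans (card_range k).le
  have hcard : #(torusPatternCells a b) ≤
      (a - 1) * (2 * (b + 1)) + a * (2 * b + 2) + 2 * b + (4 * b - 2) + 2 := by
    unfold torusPatternCells
    refine (card_union_le _ _).trans (add_le_add ((card_union_le _ _).trans
      (add_le_add ((card_union_le _ _).trans (add_le_add ((card_union_le _ _).trans
      (add_le_add ?_ ?_)) ?_)) ?_)) ?_) <;> rw [card_product]
    · exact Nat.mul_le_mul (hrows _ _) (card_pairCols_le _ _)
    · refine Nat.mul_le_mul (hrows _ _) ((card_union_le _ _).trans ?_)
      grw [card_pairCols_le, card_le_two]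
    · simpa using card_pairCols_le b 0
    · simp
    · simpa using card_le_two
  obtain ⟨a, rfl⟩ : ∃ a', a = a' + 1 := ⟨a - 1, by omega⟩
  obtain ⟨b, rfl⟩ : ∃ b', b = b' + 1 := ⟨b - 1, by omega⟩
  rw [Nat.add_sub_cancel, show 4 * (b + 1) - 2 = 4 * b + 2 by omega] at hcard
  refine Nat.le_sub_of_add_le ?_
  linarith

end Counting

theorem stmt18 (n m : ℕ) (hn : 6 ≤ n) (hm : 6 ≤ m) (h1 : m % 4 = 2) (h2 : n % 4 = 2) :
    pairedDomNum (torusGraph n m) ≤ (n + 2) * (m + 2) / 4 - 6 := by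
  obtain ⟨a, ha, rfl⟩ : ∃ a, 1 ≤ a ∧ n = 4 * a + 2 := ⟨n / 4, by omega, by omega⟩
  obtain ⟨b, hb, rfl⟩ : ∃ b, 1 ≤ b ∧ m = 4 * b + 2 := ⟨m / 4, by omega, by omega⟩
  have : Fact (1 < 4 * a + 2) := ⟨by omega⟩
  have : Fact (1 < 4 * b + 2) := ⟨by omega⟩
  have hsize : (4 * a + 2 + 2) * (4 * b + 2 + 2) / 4 = 4 * (a + 1) * (b + 1) := by
    rw [show (4 * a + 2 + 2) * (4 * b + 2 + 2) = 4 * (4 * (a + 1) * (b + 1)) by ring,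
      Nat.mul_div_cancel_left _ four_pos]
  rw [hsize]
  calc pairedDomNum (torusGraph (4 * a + 2) (4 * b + 2)) ≤ (torusPatternCells a b).card :=
        pairedDomNum_torusGraph_le (torusPatternCells a b) (torusPatternPartner a)
          (fun _ h => h.lt) (fun _ h => h.mem_cells)
          (fun _ hi hj _ => exists_inTorusPattern_torusAdj hb hi hj)
          (fun p h => ⟨h.partner, torusPatternPartner_involutive a p, h.torusAdj_partner hb⟩)
    _ ≤ 4 * (a + 1) * (b + 1) - 6 := card_torusPatternCells_le ha hb
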